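/- Assume in addition u ≠ 0. For all 0 ≤ t ≤ r ≤ T, with G(s) = ωs − log(1 + u·e^{−2ω(T−s)}), one has ∫_t^r e^{G(s)}·f₁(s,r,T) ds = −(1/2)·( (e^{ω(2T−r)}/u) − e^{ωr} )/(1 + u·e^{−2ω(T−r)}) − (1/2)·( e^{ωr} − (e^{ω(2T−r)}/u) )/(1 + u·e^{−2ω(T−t)}). -/

import Mathlib

/-!
Write `D(s) = 1 + u e^{-2ω(T-s)}`. Then `e^{G(s)} = e^{ωs}/D(s)`, `D' = 2ω(D - 1)`, and the
integrand collapses to `(e^{ω(2T-r)}/u - e^{ωr}) · ω(D(s) - 1)/D(s)²`, a constant multiple of the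
derivative of `-1/(2D)`. Since `|u| < 1` and `ω ≥ 0`, `D` stays positive for `s ≤ T`, so the
fundamental theorem of calculus gives the closed form.
-/

open Real Set

noncomputable def riccatiDenom (ω u T s : ℝ) : ℝ := 1 + u * exp (-2 * ω * (T - s))

theorem abs_sub_div_add_lt_one {a b : ℝ} (ha : 0 < a) (hb : 0 < b) : |(a - b) / (a + b)| < 1 := by
  rw [abs_div, abs_of_pos (add_pos ha hb), div_lt_one (add_pos ha hb), abs_sub_lt_iff]
  constructor <;> linarith

theorem riccatiDenom_pos {ω u T s : ℝ} (hu : |u| < 1) (hω : 0 ≤ ω) (hs : s ≤ T) :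
    0 < riccatiDenom ω u T s := by
  have hx : exp (-2 * ω * (T - s)) ≤ 1 := exp_le_one_iff.2 (by nlinarith)
  have hux : |u * exp (-2 * ω * (T - s))| < 1 := by
    rw [abs_mul, abs_of_pos (exp_pos _)]
    nlinarith [abs_nonneg u, exp_pos (-2 * ω * (T - s))]
  unfold riccatiDenom
  linarith [neg_abs_le (u * exp (-2 * ω * (T - s)))]

theorem hasDerivAt_riccatiDenom (ω u T s : ℝ) :
    HasDerivAt (riccatiDenom ω u T) (2 * ω * (riccatiDenom ω u T s - 1)) s := by
  have hlin : HasDerivAt (fun x : ℝ => -2 * ω * (T - x)) (2 * ω) s := by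
    simpa using ((hasDerivAt_id s).const_sub T).const_mul (-2 * ω)
  exact ((hlin.exp.const_mul u).const_add 1).congr_deriv (by unfold riccatiDenom; ring)

@[fun_prop]
theorem continuous_riccatiDenom (ω u T : ℝ) : Continuous (riccatiDenom ω u T) := by
  unfold riccatiDenom
  fun_prop

theorem integral_riccatiDenom_sub_one_div_sq {ω u T t r : ℝ}
    (hD : ∀ s ∈ uIcc t r, riccatiDenom ω u T s ≠ 0) :
    ∫ s in t..r, ω * (riccatiDenom ω u T s - 1) / riccatiDenom ω u T s ^ 2 =
      (1 / riccatiDenom ω u T t - 1 / riccatiDenom ω u T r) / 2 := by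
  have hderiv : ∀ s ∈ uIcc t r, HasDerivAt (fun x => -(1 / 2) / riccatiDenom ω u T x)
      (ω * (riccatiDenom ω u T s - 1) / riccatiDenom ω u T s ^ 2) s := fun s hs =>
    ((hasDerivAt_const s (-(1 / 2) : ℝ)).div (hasDerivAt_riccatiDenom ω u T s)
      (hD s hs)).congr_deriv (by ring)
  have hcont : ContinuousOn
      (fun s => ω * (riccatiDenom ω u T s - 1) / riccatiDenom ω u T s ^ 2) (uIcc t r) :=
    ContinuousOn.div (by fun_prop) (by fun_prop) fun s hs => pow_ne_zero 2 (hD s hs)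
  rw [intervalIntegral.integral_eq_sub_of_hasDerivAt hderiv hcont.intervalIntegrable]
  ring

theorem exp_sub_log_riccatiDenom_mul_eq {ω u T s r : ℝ} (hu : u ≠ 0)
    (hD : 0 < riccatiDenom ω u T s) :
    exp (ω * s - log (riccatiDenom ω u T s)) *
        (ω * (exp (-ω * (r - s)) - u * exp (-ω * (2 * T - r - s))) / riccatiDenom ω u T s) =
      (exp (ω * (2 * T - r)) / u - exp (ω * r)) *
        (ω * (riccatiDenom ω u T s - 1) / riccatiDenom ω u T s ^ 2) := by
  have hsub : riccatiDenom ω u T s - 1 = u * exp (-2 * ω * (T - s)) := by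
    unfold riccatiDenom; ring
  rw [exp_sub, exp_log hD, hsub]
  have e1 : exp (-ω * (r - s)) = exp (ω * s) / exp (ω * r) := by rw [← exp_sub]; ring_nf
  have e2 : exp (-ω * (2 * T - r - s)) = exp (ω * s) * exp (ω * r) / exp (ω * T) ^ 2 := by
    rw [← exp_add, ← exp_nat_mul, ← exp_sub]; ring_nf
  have e3 : exp (-2 * ω * (T - s)) = exp (ω * s) ^ 2 / exp (ω * T) ^ 2 := by
    rw [← exp_nat_mul, ← exp_nat_mul, ← exp_sub]; ring_nf
  have e4 : exp (ω * (2 * T - r)) = exp (ω * T) ^ 2 / exp (ω * r) := by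
    rw [← exp_nat_mul, ← exp_sub]; ring_nf
  rw [e1, e2, e3, e4]
  field_simp

theorem stmt_7_general (α β γ T : ℝ) (hα : 0 < α) (hβ : 0 < β) (hγ : 0 < γ)
    (ω u : ℝ) (hω : ω = Real.sqrt (β / α))
    (hu : u = (Real.sqrt (α * β) - γ) / (Real.sqrt (α * β) + γ)) (hu0 : u ≠ 0)
    (f₁ : ℝ → ℝ → ℝ)
    (hf₁ : ∀ t s, f₁ t s = ω * (Real.exp (-ω * (s - t)) - u * Real.exp (-ω * (2 * T - s - t))) /
      (1 + u * Real.exp (-2 * ω * (T - t))))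
    (G : ℝ → ℝ)
    (hG : ∀ s, G s = ω * s - Real.log (1 + u * Real.exp (-2 * ω * (T - s)))) :
    ∀ t r, 0 ≤ t → t ≤ r → r ≤ T →
      (∫ s in t..r, Real.exp (G s) * f₁ s r) =
        -(1 / 2) * (Real.exp (ω * (2 * T - r)) / u - Real.exp (ω * r)) /
            (1 + u * Real.exp (-2 * ω * (T - r))) -
          (1 / 2) * (Real.exp (ω * r) - Real.exp (ω * (2 * T - r)) / u) /
            (1 + u * Real.exp (-2 * ω * (T - t))) := by
  intro t r _ htr hrT
  have hu1 : |u| < 1 := hu ▸ abs_sub_div_add_lt_one (sqrt_pos.2 (mul_pos hα hβ)) hγ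
  have hD : ∀ s ∈ uIcc t r, 0 < riccatiDenom ω u T s := fun s hs =>
    riccatiDenom_pos hu1 (hω ▸ sqrt_nonneg _) (((uIcc_of_le htr) ▸ hs).2.trans hrT)
  calc (∫ s in t..r, exp (G s) * f₁ s r)
      = ∫ s in t..r, (exp (ω * (2 * T - r)) / u - exp (ω * r)) *
          (ω * (riccatiDenom ω u T s - 1) / riccatiDenom ω u T s ^ 2) :=
        intervalIntegral.integral_congr fun s hs => by
          rw [hG, hf₁]
          exact exp_sub_log_riccatiDenom_mul_eq hu0 (hD s hs)
    _ = _ := by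
        rw [intervalIntegral.integral_const_mul,
          integral_riccatiDenom_sub_one_div_sq fun s hs => (hD s hs).ne']
        unfold riccatiDenom
        ring

/-- Assume `u ≠ 0`. For all `0 ≤ t ≤ r ≤ T`, with `G(s) = ωs − log(1 + u·e^{−2ω(T−s)})`,
`∫_t^r e^{G(s)}·f₁(s,r,T) ds = −(1/2)·((e^{ω(2T−r)}/u) − e^{ωr})/(1 + u·e^{−2ω(T−r)})
  − (1/2)·(e^{ωr} − (e^{ω(2T−r)}/u))/(1 + u·e^{−2ω(T−t)})`. -/
theorem stmt_7 (α β γ T : ℝ) (hα : 0 < α) (hβ : 0 < β) (hγ : 0 < γ) (hT : 0 < T)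
    (ω u : ℝ) (hω : ω = Real.sqrt (β / α))
    (hu : u = (Real.sqrt (α * β) - γ) / (Real.sqrt (α * β) + γ)) (hu0 : u ≠ 0)
    (f₁ : ℝ → ℝ → ℝ)
    (hf₁ : ∀ t s, f₁ t s = ω * (Real.exp (-ω * (s - t)) - u * Real.exp (-ω * (2 * T - s - t))) /
      (1 + u * Real.exp (-2 * ω * (T - t))))
    (G : ℝ → ℝ)
    (hG : ∀ s, G s = ω * s - Real.log (1 + u * Real.exp (-2 * ω * (T - s)))) :
    ∀ t r, 0 ≤ t → t ≤ r → r ≤ T →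
      (∫ s in t..r, Real.exp (G s) * f₁ s r) =
        -(1 / 2) * (Real.exp (ω * (2 * T - r)) / u - Real.exp (ω * r)) /
            (1 + u * Real.exp (-2 * ω * (T - r))) -
          (1 / 2) * (Real.exp (ω * r) - Real.exp (ω * (2 * T - r)) / u) /
            (1 + u * Real.exp (-2 * ω * (T - t))) :=
  stmt_7_general α β γ T hα hβ hγ ω u hω hu hu0 f₁ hf₁ G hG
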